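/- arXiv:1311.0479 — 2 statements merged into one kernel-verified Lean document; each statement's English description precedes it below -/
import Mathlib

section
/- For any digraph D on n vertices, if l(D) denotes the length (number of arcs) of a longest directed path in D, then γ⁺ₘ(D) ≤ ⌈(2n − l(D) − 1)/4⌉. -/
/-- Closed out-neighborhood `N⁺[S]` of a set `S` in the digraph with arc relation `A`. -/
noncomputable def closedOut {V : Type*} [Fintype V] [DecidableEq V]
    (A : V → V → Prop) (S : Finset V) : Finset V :=
  S ∪ @Finset.filter _ (fun v => ∃ u ∈ S, A u v) (Classical.decPred _) Finset.univ

/-- `S` is a majority out-dominating set: `|N⁺[S]| ≥ n/2`. -/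
def IsMODS {V : Type*} [Fintype V] [DecidableEq V]
    (A : V → V → Prop) (S : Finset V) : Prop :=
  2 * (closedOut A S).card ≥ Fintype.card V

/-- Set majority out-domination number `γ⁺ₘ`. -/
noncomputable def gammaM {V : Type*} [Fintype V] [DecidableEq V]
    (A : V → V → Prop) : ℕ :=
  sInf {k | ∃ S : Finset V, IsMODS A S ∧ S.card = k}

/-- Out-domination number `γ⁺`. -/
noncomputable def gammaPlus {V : Type*} [Fintype V] [DecidableEq V]
    (A : V → V → Prop) : ℕ :=
  sInf {k | ∃ S : Finset V, closedOut A S = Finset.univ ∧ S.card = k}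

/-- Out-degree of a vertex. -/
noncomputable def outDeg {V : Type*} [Fintype V] [DecidableEq V]
    (A : V → V → Prop) (v : V) : ℕ :=
  (@Finset.filter _ (fun w => A v w) (Classical.decPred _) Finset.univ).card

/-- Maximum out-degree `Δ⁺`. -/
noncomputable def DeltaPlus {V : Type*} [Fintype V] [DecidableEq V]
    (A : V → V → Prop) : ℕ :=
  Finset.univ.sup (outDeg A)

/-!
Every other vertex among the first `2p` vertices of a longest path gives `p` vertices that
out-dominate `2p` vertices. Any set `S` becomes a MODS after adding `⌈n/2⌉ - |N⁺[S]|`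
vertices outside `N⁺[S]`, so `γ⁺ₘ ≤ p + (⌈n/2⌉ - 2p)`. With `p = min ⌊(l+1)/2⌋ ⌈n/4⌉`
(larger `p` no longer helps once `2p` vertices already reach `n/2`) this is at most
`⌈(2n - l - 1)/4⌉`.
-/

section

variable {V : Type*} [Fintype V] [DecidableEq V] (A : V → V → Prop)

theorem mem_closedOut {S : Finset V} {v : V} :
    v ∈ closedOut A S ↔ v ∈ S ∨ ∃ u ∈ S, A u v := by
  simp [closedOut]

theorem subset_closedOut (S : Finset V) : S ⊆ closedOut A S :=
  Finset.subset_union_left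

theorem closedOut_mono {S T : Finset V} (h : S ⊆ T) : closedOut A S ⊆ closedOut A T := by
  intro v hv
  rcases (mem_closedOut A).1 hv with hvS | ⟨u, huS, huv⟩
  · exact (mem_closedOut A).2 (Or.inl (h hvS))
  · exact (mem_closedOut A).2 (Or.inr ⟨u, h huS, huv⟩)

theorem gammaM_le_card {S : Finset V} (hS : IsMODS A S) : gammaM A ≤ S.card :=
  Nat.sInf_le ⟨S, hS, rfl⟩

theorem gammaM_le_card_add_sub_card_closedOut (S : Finset V) :
    gammaM A ≤ S.card + ((Fintype.card V + 1) / 2 - (closedOut A S).card) := by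
  set k := (Fintype.card V + 1) / 2 - (closedOut A S).card
  have hk : k ≤ (Finset.univ \ closedOut A S).card := by
    rw [Finset.card_univ_sdiff]
    have := (closedOut A S).card_le_univ
    omega
  obtain ⟨T, hT, hTk⟩ := Finset.exists_subset_card_eq hk
  have hdisj : Disjoint (closedOut A S) T :=
    Finset.disjoint_left.2 fun v hv hvT => (Finset.mem_sdiff.1 (hT hvT)).2 hv
  have hsub : closedOut A S ∪ T ⊆ closedOut A (S ∪ T) :=
    Finset.union_subset (closedOut_mono A Finset.subset_union_left)
      (Finset.subset_union_right.trans (subset_closedOut A _))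
  have hmods : IsMODS A (S ∪ T) := by
    have := Finset.card_le_card hsub
    rw [Finset.card_union_of_disjoint hdisj] at this
    unfold IsMODS
    omega
  exact hTk ▸ (gammaM_le_card A hmods).trans (Finset.card_union_le S T)

theorem exists_card_le_and_le_card_closedOut_of_path {m : ℕ} {f : Fin (m + 1) → V}
    (hf : Function.Injective f) (harc : ∀ i : Fin m, A (f i.castSucc) (f i.succ))
    {p : ℕ} (hp : 2 * p ≤ m + 1) :
    ∃ S : Finset V, S.card ≤ p ∧ 2 * p ≤ (closedOut A S).card := by
  let path : ℕ → V := fun i => if h : i < m + 1 then f ⟨i, h⟩ else f 0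
  have path_injOn : Set.InjOn path (Set.Iio (m + 1)) := by
    intro i hi j hj hij
    simp only [Set.mem_Iio] at hi hj
    simp only [path, dif_pos hi, dif_pos hj] at hij
    exact Fin.ext_iff.1 (hf hij)
  have path_arc : ∀ i < m, A (path i) (path (i + 1)) := by
    intro i hi
    simp only [path, dif_pos (Nat.lt_succ_of_lt hi), dif_pos (Nat.succ_lt_succ hi)]
    exact harc ⟨i, hi⟩
  refine ⟨(Finset.range p).image fun j => path (2 * j), ?_, ?_⟩
  · exact Finset.card_image_le.trans (Finset.card_range p).le
  · have hcard : ((Finset.range (2 * p)).image path).card = 2 * p := by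
      rw [Finset.card_image_of_injOn (path_injOn.mono fun i hi => by
        simp only [Finset.coe_range, Set.mem_Iio] at hi ⊢; omega), Finset.card_range]
    refine hcard.symm.le.trans (Finset.card_le_card fun v hv => ?_)
    obtain ⟨i, hi, rfl⟩ := Finset.mem_image.1 hv
    rw [Finset.mem_range] at hi
    rw [mem_closedOut, Finset.mem_image]
    obtain ⟨j, rfl | rfl⟩ := Nat.even_or_odd' i
    · exact Or.inl ⟨j, Finset.mem_range.2 (by omega), rfl⟩
    · exact Or.inr ⟨path (2 * j), Finset.mem_image.2 ⟨j, Finset.mem_range.2 (by omega), rfl⟩,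
        path_arc _ (by omega)⟩

end

/-- If `l` is the length of a longest directed path of `D`, then
`γ⁺ₘ(D) ≤ ⌈(2n - l - 1)/4⌉`. -/
theorem stmt6 {V : Type*} [Fintype V] [DecidableEq V]
    (A : V → V → Prop) (l : ℕ)
    (hl : IsGreatest {m | ∃ f : Fin (m + 1) → V, Function.Injective f ∧
      ∀ i : Fin m, A (f i.castSucc) (f i.succ)} l) :
    gammaM A ≤ (2 * Fintype.card V - (l + 1) + 3) / 4 := by
  obtain ⟨⟨f, hf, harc⟩, -⟩ := hl
  have hln : l + 1 ≤ Fintype.card V := by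
    simpa using Fintype.card_le_of_injective f hf
  set p := min ((l + 1) / 2) ((Fintype.card V + 3) / 4) with hp
  obtain ⟨S, hS, hN⟩ := exists_card_le_and_le_card_closedOut_of_path A hf harc
    (p := p) (by omega)
  calc gammaM A ≤ S.card + ((Fintype.card V + 1) / 2 - (closedOut A S).card) :=
        gammaM_le_card_add_sub_card_closedOut A S
    _ ≤ (2 * Fintype.card V - (l + 1) + 3) / 4 := by omega
end

section
/- For every undirected graph G, the lower orientable set majority domination number dom⁺ₘ(G) equals the set majority domination number γₘ(G). -/
/-- Closed neighborhood `N[M]` in an undirected graph. -/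
noncomputable def closedNbhd {V : Type*} [Fintype V] [DecidableEq V]
    (G : SimpleGraph V) (M : Finset V) : Finset V :=
  M ∪ @Finset.filter _ (fun v => ∃ u ∈ M, G.Adj u v) (Classical.decPred _) Finset.univ

/-- The set majority domination number `γₘ(G)` of a graph. -/
noncomputable def gammaSetMaj {V : Type*} [Fintype V] [DecidableEq V]
    (G : SimpleGraph V) : ℕ :=
  sInf {k | ∃ M : Finset V, 2 * (closedNbhd G M).card ≥ Fintype.card V ∧ M.card = k}

/-- `A` is an orientation of `G`: every arc comes from an edge, and each edge
receives exactly one of its two possible directions. -/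
def IsOrientation {V : Type*} (G : SimpleGraph V) (A : V → V → Prop) : Prop :=
  (∀ u v, A u v → G.Adj u v) ∧ (∀ u v, G.Adj u v → (A u v ↔ ¬ A v u))

/-- The lower orientable set majority domination number `dom⁺ₘ(G)`. -/
noncomputable def domM {V : Type*} [Fintype V] [DecidableEq V]
    (G : SimpleGraph V) : ℕ :=
  sInf {k | ∃ A : V → V → Prop, IsOrientation G A ∧ gammaM A = k}

section Aux
variable {V : Type*} [Fintype V] [DecidableEq V]

lemma closedOut_subset {G : SimpleGraph V} {A : V → V → Prop}
    (h : ∀ u v, A u v → G.Adj u v) (S : Finset V) :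
    closedOut A S ⊆ closedNbhd G S := by
  intro v hv
  simp only [closedOut, closedNbhd, Finset.mem_union, Finset.mem_filter,
    Finset.mem_univ, true_and] at hv ⊢
  exact hv.imp id (fun ⟨u, hu, ha⟩ => ⟨u, hu, h u v ha⟩)

lemma gammaM_nonempty (A : V → V → Prop) :
    {k | ∃ S : Finset V, IsMODS A S ∧ S.card = k}.Nonempty := by
  refine ⟨(Finset.univ : Finset V).card, Finset.univ, ?_, rfl⟩
  have h : (Finset.univ : Finset V) ⊆ closedOut A Finset.univ :=
    Finset.subset_union_left
  have := Finset.card_le_card h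
  simp only [IsMODS, Finset.card_univ] at *
  omega

lemma le_gammaM {G : SimpleGraph V} {A : V → V → Prop} (hA : IsOrientation G A) :
    gammaSetMaj G ≤ gammaM A := by
  obtain ⟨S, hS, hcard⟩ := Nat.sInf_mem (gammaM_nonempty A)
  refine le_trans (Nat.sInf_le ⟨S, ?_, rfl⟩) hcard.le
  have hle := Finset.card_le_card (closedOut_subset hA.1 S)
  unfold IsMODS at hS; omega

lemma exists_orientation (G : SimpleGraph V) (M : Finset V) :
    ∃ A : V → V → Prop, IsOrientation G A ∧ closedNbhd G M ⊆ closedOut A M := by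
  classical
  let e := Fintype.equivFin V
  refine ⟨fun u v => G.Adj u v ∧ ((u ∈ M ∧ v ∉ M) ∨ ((u ∈ M ↔ v ∈ M) ∧ e u < e v)),
    ⟨fun u v h => h.1, ?_⟩, ?_⟩
  · intro u v hadj
    have hne : e u ≠ e v := fun h => G.ne_of_adj hadj (e.injective h)
    have htri := lt_or_gt_of_ne hne
    constructor
    · rintro ⟨-, h⟩ ⟨-, h'⟩
      rcases h with ⟨hu, hv⟩ | ⟨hiff, hlt⟩ <;> rcases h' with ⟨hv', hu'⟩ | ⟨hiff', hlt'⟩ <;>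
        first | tauto | exact absurd (hlt.trans hlt') (lt_irrefl _)
    · intro h
      refine ⟨hadj, ?_⟩
      by_cases hu : u ∈ M <;> by_cases hv : v ∈ M <;>
        rcases htri with hlt | hlt <;>
        simp_all [hadj.symm] <;> tauto
  · intro v hv
    simp only [closedNbhd, closedOut, Finset.mem_union, Finset.mem_filter,
      Finset.mem_univ, true_and] at hv ⊢
    rcases hv with hv | ⟨u, hu, hadj⟩
    · exact Or.inl hv
    · by_cases hvM : v ∈ M
      · exact Or.inl hvM
      · exact Or.inr ⟨u, hu, hadj, Or.inl ⟨hu, hvM⟩⟩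

end Aux


/-- For every graph `G`, `dom⁺ₘ(G) = γₘ(G)`. -/
theorem stmt19 {V : Type*} [Fintype V] [DecidableEq V] (G : SimpleGraph V) :
    domM G = gammaSetMaj G := by
  classical
  have hne : {k | ∃ M : Finset V, 2 * (closedNbhd G M).card ≥ Fintype.card V ∧ M.card = k}.Nonempty := by
    refine ⟨(Finset.univ : Finset V).card, Finset.univ, ?_, rfl⟩
    have h : (Finset.univ : Finset V) ⊆ closedNbhd G Finset.univ :=
      Finset.subset_union_left
    have := Finset.card_le_card h
    simp only [Finset.card_univ] at *
    omega
  obtain ⟨M, hM, hMcard⟩ := Nat.sInf_mem hne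
  obtain ⟨A, hA, hsub⟩ := exists_orientation G M
  have hMODS : IsMODS A M := by
    have := Finset.card_le_card hsub
    unfold IsMODS; omega
  have h1 : gammaM A ≤ gammaSetMaj G := by
    unfold gammaSetMaj; rw [← hMcard]; exact Nat.sInf_le ⟨M, hMODS, rfl⟩
  have h2 : gammaSetMaj G ≤ gammaM A := le_gammaM hA
  have heq : gammaM A = gammaSetMaj G := le_antisymm h1 h2
  have hdne : {k | ∃ A : V → V → Prop, IsOrientation G A ∧ gammaM A = k}.Nonempty :=
    ⟨gammaSetMaj G, A, hA, heq⟩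
  apply le_antisymm
  · exact Nat.sInf_le ⟨A, hA, heq⟩
  · obtain ⟨A', hA', hA'eq⟩ := Nat.sInf_mem hdne
    unfold domM; rw [← hA'eq]; exact le_gammaM hA'
end
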